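/- arXiv:1304.4894 — 2 statements merged into one kernel-verified Lean document; each statement's English description precedes it below -/
import Mathlib

section
/- Let J = [0,∞) and let f : J → ℝ be differentiable on the interior of J with f' integrable on [u,v], where u, v ∈ J and 0 < u < v. Let q > 1 and p satisfy 1/p + 1/q = 1, and let s ∈ (0,1]. If |f'|^q is s-convex in the second sense on [u,v], then |(v·f(v) - u·f(u))/(2(v-u)) + (1/2)·f((u+v)/2) - (1/(v-u))·∫_u^v f(μ) dμ| ≤ (L_p(u,v)/4)·[((|f'((u+v)/2)|^q + |f'(v)|^q)/(s+1))^{1/q} + ((|f'((u+v)/2)|^q + |f'(u)|^q)/(s+1))^{1/q}] ≤ (L_p(u,v)/4)·[(|f'((u+v)/2)|^q + |f'(v)|^q)^{1/q} + (|f'((u+v)/2)|^q + |f'(u)|^q)^{1/q}]. -/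
/-!
Integrating by parts on the halves `[u, m]` and `[m, v]` of `[u, v]` against the weights
`2x - u` and `2x - v` writes the left-hand side as `(I₁ + I₂) / (2(v - u))`. Hölder's
inequality bounds each `|Iᵢ|` by `(∫ wᵢ ^ p) ^ (1/p) * (∫ |f'| ^ q) ^ (1/q)`. Both weights map
their half of the interval affinely onto `[u, v]`, so the first factor is
`(L_p(u, v) ^ p * (v - u) / 2) ^ (1/p)`; the second is controlled by the Hermite–Hadamard type
bound `∫ₐᵇ g ≤ (b - a)(g a + g b)/(s + 1)` for `s`-convex `g`. The second inequality is just
`s + 1 ≥ 1`.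
-/

open MeasureTheory Set

/-- `s`-convexity in the second sense; the nonnegativity required in the paper's definition is
assumed separately where it is needed. -/
def SConvexOn (s : ℝ) (S : Set ℝ) (g : ℝ → ℝ) : Prop :=
  ∀ a ∈ S, ∀ b ∈ S, ∀ t ∈ Icc (0:ℝ) 1, g (t * a + (1 - t) * b) ≤ t ^ s * g a + (1 - t) ^ s * g b

noncomputable def genLogMean (p u v : ℝ) : ℝ :=
  ((v ^ (p + 1) - u ^ (p + 1)) / ((p + 1) * (v - u))) ^ (1 / p)

theorem SConvexOn.subset {s : ℝ} {S T : Set ℝ} {g : ℝ → ℝ} (hg : SConvexOn s S g) (hTS : T ⊆ S) :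
    SConvexOn s T g :=
  fun a ha b hb t ht => hg a (hTS ha) b (hTS hb) t ht

theorem SConvexOn.le_of_mem_Icc {s a b : ℝ} {g : ℝ → ℝ} (hg : SConvexOn s (Icc a b) g)
    (hab : a < b) {x : ℝ} (hx : x ∈ Icc a b) :
    g x ≤ ((x - a) / (b - a)) ^ s * g b + ((b - x) / (b - a)) ^ s * g a := by
  have hba : 0 < b - a := sub_pos.2 hab
  have ht : (x - a) / (b - a) ∈ Icc (0:ℝ) 1 :=
    ⟨div_nonneg (by linarith [hx.1]) hba.le, (div_le_one hba).2 (by linarith [hx.2])⟩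
  have h := hg b (right_mem_Icc.2 hab.le) a (left_mem_Icc.2 hab.le) _ ht
  have h1 : 1 - (x - a) / (b - a) = (b - x) / (b - a) := by field_simp; ring
  have h2 : (x - a) / (b - a) * b + (b - x) / (b - a) * a = x := by field_simp; ring
  rwa [h1, h2] at h

theorem integral_sub_div_rpow {a b s : ℝ} (hab : a < b) (hs : -1 < s) :
    ∫ x in a..b, ((x - a) / (b - a)) ^ s = (b - a) / (s + 1) := by
  have hba : b - a ≠ 0 := (sub_pos.2 hab).ne'
  rw [intervalIntegral.integral_comp_sub_right (fun y => (y / (b - a)) ^ s),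
    intervalIntegral.integral_comp_div (fun y => y ^ s) hba, sub_self, zero_div, div_self hba,
    integral_rpow (Or.inl hs), Real.one_rpow, Real.zero_rpow (by linarith), smul_eq_mul]
  ring

theorem integral_sub_div_rpow' {a b s : ℝ} (hab : a < b) (hs : -1 < s) :
    ∫ x in a..b, ((b - x) / (b - a)) ^ s = (b - a) / (s + 1) := by
  have := intervalIntegral.integral_comp_sub_left (fun x => ((x - a) / (b - a)) ^ s) (a + b)
    (a := a) (b := b)
  simp only [add_sub_cancel_right, add_sub_cancel_left] at this
  rw [← integral_sub_div_rpow hab hs, ← this]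
  congr 1; ext x; ring_nf

theorem continuous_sConvex_majorant {s : ℝ} (hs : 0 ≤ s) (a b A B : ℝ) :
    Continuous fun x => ((x - a) / (b - a)) ^ s * B + ((b - x) / (b - a)) ^ s * A := by
  refine ((Continuous.rpow_const ?_ fun _ => Or.inr hs).mul continuous_const).add
    ((Continuous.rpow_const ?_ fun _ => Or.inr hs).mul continuous_const) <;> fun_prop

theorem SConvexOn.intervalIntegrable {s a b : ℝ} {g : ℝ → ℝ} (hg : SConvexOn s (Icc a b) g)
    (hab : a < b) (hs : 0 ≤ s) (hmeas : AEStronglyMeasurable g (volume.restrict (uIoc a b)))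
    (hg0 : ∀ x ∈ Icc a b, 0 ≤ g x) : IntervalIntegrable g volume a b := by
  refine (continuous_sConvex_majorant hs a b (g a) (g b)).intervalIntegrable a b |>.mono_fun'
    hmeas (ae_restrict_of_forall_mem measurableSet_uIoc fun x hx => ?_)
  have hx : x ∈ Icc a b := Ioc_subset_Icc_self (by rwa [uIoc_of_le hab.le] at hx)
  show ‖g x‖ ≤ _
  rw [Real.norm_of_nonneg (hg0 x hx)]
  exact hg.le_of_mem_Icc hab hx

theorem SConvexOn.integral_le {s a b : ℝ} {g : ℝ → ℝ} (hg : SConvexOn s (Icc a b) g)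
    (hab : a < b) (hs : 0 ≤ s) (hint : IntervalIntegrable g volume a b) :
    ∫ x in a..b, g x ≤ (b - a) * ((g a + g b) / (s + 1)) := by
  have hpow : ∀ {φ : ℝ → ℝ} (C : ℝ), Continuous φ →
      IntervalIntegrable (fun x => φ x ^ s * C) volume a b :=
    fun C hφ => ((hφ.rpow_const fun _ => Or.inr hs).mul continuous_const).intervalIntegrable a b
  calc ∫ x in a..b, g x
      ≤ ∫ x in a..b, (((x - a) / (b - a)) ^ s * g b + ((b - x) / (b - a)) ^ s * g a) :=
        intervalIntegral.integral_mono_on hab.le hint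
          ((continuous_sConvex_majorant hs a b (g a) (g b)).intervalIntegrable a b)
          fun x hx => hg.le_of_mem_Icc hab hx
    _ = (b - a) * ((g a + g b) / (s + 1)) := by
        rw [intervalIntegral.integral_add, intervalIntegral.integral_mul_const,
          intervalIntegral.integral_mul_const, integral_sub_div_rpow hab (by linarith),
          integral_sub_div_rpow' hab (by linarith)]
        · ring
        all_goals exact hpow _ (by fun_prop)

theorem abs_intervalIntegral_mul_le_Lp_mul_Lq {p q : ℝ} (hpq : p.HolderConjugate q) {a b : ℝ}
    (hab : a ≤ b) {f g : ℝ → ℝ} (hf : IntervalIntegrable f volume a b)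
    (hfp : IntervalIntegrable (fun x => |f x| ^ p) volume a b)
    (hg : IntervalIntegrable g volume a b)
    (hgq : IntervalIntegrable (fun x => |g x| ^ q) volume a b) :
    |∫ x in a..b, f x * g x|
      ≤ (∫ x in a..b, |f x| ^ p) ^ (1 / p) * (∫ x in a..b, |g x| ^ q) ^ (1 / q) := by
  have memLp : ∀ {h : ℝ → ℝ} {r : ℝ}, 0 < r → IntervalIntegrable h volume a b →
      IntervalIntegrable (fun x => |h x| ^ r) volume a b →
      MemLp h (ENNReal.ofReal r) (volume.restrict (Ioc a b)) := fun hr hh hhr =>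
    (integrable_norm_rpow_iff hh.1.aestronglyMeasurable (by simpa using hr)
      ENNReal.ofReal_ne_top).mp (by simpa [ENNReal.toReal_ofReal hr.le, IntegrableOn] using hhr.1)
  simp only [intervalIntegral.integral_of_le hab, ← Real.norm_eq_abs]
  calc ‖∫ x in Ioc a b, f x * g x‖ ≤ ∫ x in Ioc a b, ‖f x‖ * ‖g x‖ := by
        simpa only [norm_mul] using norm_integral_le_integral_norm (fun x => f x * g x)
    _ ≤ _ := integral_mul_norm_le_Lp_mul_Lq hpq (memLp hpq.pos hf hfp) (memLp hpq.symm.pos hg hgq)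

theorem integral_linear_rpow {k c p : ℝ} (a b : ℝ) (hk : k ≠ 0) (hp : -1 < p) :
    ∫ x in a..b, (k * x - c) ^ p
      = ((k * b - c) ^ (p + 1) - (k * a - c) ^ (p + 1)) / (k * (p + 1)) := by
  rw [intervalIntegral.integral_comp_mul_sub (fun y => y ^ p) hk, integral_rpow (Or.inl hp),
    smul_eq_mul]
  field_simp

theorem integral_linear_mul_deriv {f f' : ℝ → ℝ} {a b : ℝ} (k c : ℝ)
    (hf : ∀ x ∈ uIcc a b, HasDerivAt f (f' x) x) (hf' : IntervalIntegrable f' volume a b) :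
    ∫ x in a..b, (k * x - c) * f' x
      = (k * b - c) * f b - (k * a - c) * f a - k * ∫ x in a..b, f x := by
  rw [intervalIntegral.integral_mul_deriv_eq_deriv_mul
    (fun x _ => ((hasDerivAt_id' x).const_mul k).sub_const c) hf intervalIntegrable_const hf',
    intervalIntegral.integral_const_mul]
  simp

theorem rpow_sub_rpow_div_nonneg {p u v : ℝ} (hp : -1 < p) (hu : 0 ≤ u) (huv : u ≤ v) :
    0 ≤ (v ^ (p + 1) - u ^ (p + 1)) / ((p + 1) * (v - u)) := by
  have hp1 : 0 < p + 1 := by linarith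
  exact div_nonneg (sub_nonneg.2 (Real.rpow_le_rpow hu huv hp1.le))
    (mul_nonneg hp1.le (sub_nonneg.2 huv))

theorem genLogMean_nonneg {p u v : ℝ} (hp : -1 < p) (hu : 0 ≤ u) (huv : u ≤ v) :
    0 ≤ genLogMean p u v :=
  Real.rpow_nonneg (rpow_sub_rpow_div_nonneg hp hu huv) _

theorem rpow_one_div_mul_rpow_one_div_of_add_eq_one {p q X d E : ℝ} (hpq : 1 / p + 1 / q = 1)
    (hX : 0 ≤ X) (hd : 0 ≤ d) (hE : 0 ≤ E) :
    (X * d) ^ (1 / p) * (d * E) ^ (1 / q) = X ^ (1 / p) * d * E ^ (1 / q) := by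
  rw [Real.mul_rpow hX hd, Real.mul_rpow hd hE]
  calc X ^ (1 / p) * d ^ (1 / p) * (d ^ (1 / q) * E ^ (1 / q))
      = X ^ (1 / p) * d ^ (1 / p + 1 / q) * E ^ (1 / q) := by
        rw [Real.rpow_add' hd (by rw [hpq]; exact one_ne_zero)]; ring
    _ = X ^ (1 / p) * d * E ^ (1 / q) := by rw [hpq, Real.rpow_one]

theorem abs_integral_linear_mul_le_genLogMean {f' : ℝ → ℝ} {a b c u v p q s : ℝ}
    (hpq : p.HolderConjugate q) (hs : 0 ≤ s) (hab : a < b) (hu : 0 ≤ u)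
    (hca : 2 * a - c = u) (hcb : 2 * b - c = v) (hf' : IntervalIntegrable f' volume a b)
    (hconv : SConvexOn s (Icc a b) fun x => |f' x| ^ q) :
    |∫ x in a..b, (2 * x - c) * f' x|
      ≤ genLogMean p u v * (b - a) * ((|f' a| ^ q + |f' b| ^ q) / (s + 1)) ^ (1 / q) := by
  have hvu : v - u = 2 * (b - a) := by linarith
  have hX := rpow_sub_rpow_div_nonneg (p := p) (by linarith [hpq.pos]) hu (by linarith : u ≤ v)
  have hweight : ∫ x in a..b, |2 * x - c| ^ p
      = (v ^ (p + 1) - u ^ (p + 1)) / ((p + 1) * (v - u)) * (b - a) := by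
    rw [← intervalIntegral.integral_congr (f := fun x => (2 * x - c) ^ p) fun x hx => ?_,
      integral_linear_rpow a b two_ne_zero (by linarith [hpq.pos]), hca, hcb, hvu]
    · have : b - a ≠ 0 := (sub_pos.2 hab).ne'
      field_simp
    · rw [uIcc_of_le hab.le] at hx
      rw [abs_of_nonneg (by linarith [hx.1])]
  have hmeas : AEStronglyMeasurable (fun x => |f' x| ^ q) (volume.restrict (uIoc a b)) := by
    rw [uIoc_of_le hab.le]
    exact (hf'.aestronglyMeasurable.norm.aemeasurable.pow_const q).aestronglyMeasurable
  have hint := hconv.intervalIntegrable hab hs hmeas fun x _ => by positivity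
  have hw : Continuous fun x => 2 * x - c := by fun_prop
  have hwp : Continuous fun x => |2 * x - c| ^ p :=
    hw.abs.rpow_const fun _ => Or.inr hpq.nonneg
  calc |∫ x in a..b, (2 * x - c) * f' x|
      ≤ (∫ x in a..b, |2 * x - c| ^ p) ^ (1 / p) * (∫ x in a..b, |f' x| ^ q) ^ (1 / q) :=
        abs_intervalIntegral_mul_le_Lp_mul_Lq hpq hab.le (hw.intervalIntegrable a b)
          (hwp.intervalIntegrable a b) hf' hint
    _ ≤ ((v ^ (p + 1) - u ^ (p + 1)) / ((p + 1) * (v - u)) * (b - a)) ^ (1 / p)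
          * ((b - a) * ((|f' a| ^ q + |f' b| ^ q) / (s + 1))) ^ (1 / q) := by
        rw [hweight]
        refine mul_le_mul_of_nonneg_left (Real.rpow_le_rpow ?_ (hconv.integral_le hab hs hint)
          hpq.symm.one_div_nonneg) (Real.rpow_nonneg (mul_nonneg hX (by linarith)) _)
        exact intervalIntegral.integral_nonneg hab.le fun x _ => by positivity
    _ = genLogMean p u v * (b - a) * ((|f' a| ^ q + |f' b| ^ q) / (s + 1)) ^ (1 / q) :=
        rpow_one_div_mul_rpow_one_div_of_add_eq_one
          (by simpa only [one_div] using hpq.inv_add_inv_eq_one) hX (by linarith) (by positivity)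

theorem trapezoid_midpoint_sub_integral_eq {f f' : ℝ → ℝ} {u v : ℝ} (huv : u < v)
    (hf : ∀ x ∈ Icc u v, HasDerivAt f (f' x) x) (hf' : IntervalIntegrable f' volume u v) :
    (v * f v - u * f u) / (2 * (v - u)) + (1 / 2) * f ((u + v) / 2)
        - (1 / (v - u)) * ∫ x in u..v, f x
      = ((∫ x in u..(u + v) / 2, (2 * x - u) * f' x)
          + ∫ x in (u + v) / 2..v, (2 * x - v) * f' x) / (2 * (v - u)) := by
  have hsub₁ : uIcc u ((u + v) / 2) ⊆ uIcc u v := uIcc_subset_uIcc_left (by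
    rw [uIcc_of_le huv.le]; constructor <;> linarith)
  have hsub₂ : uIcc ((u + v) / 2) v ⊆ uIcc u v := uIcc_subset_uIcc_right (by
    rw [uIcc_of_le huv.le]; constructor <;> linarith)
  rw [← uIcc_of_le huv.le] at hf
  have hfc : ContinuousOn f (uIcc u v) := fun x hx => (hf x hx).continuousAt.continuousWithinAt
  rw [integral_linear_mul_deriv 2 u (fun x hx => hf x (hsub₁ hx)) (hf'.mono_set hsub₁),
    integral_linear_mul_deriv 2 v (fun x hx => hf x (hsub₂ hx)) (hf'.mono_set hsub₂),
    ← intervalIntegral.integral_add_adjacent_intervals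
      ((hfc.mono hsub₁).intervalIntegrable) ((hfc.mono hsub₂).intervalIntegrable)]
  have : v - u ≠ 0 := (sub_pos.2 huv).ne'
  field_simp
  ring

theorem stmt_9_general (f f' : ℝ → ℝ) (u v p q s : ℝ) (hu : 0 < u) (huv : u < v)
    (hq : 1 < q) (hpq : 1 / p + 1 / q = 1) (hs0 : 0 < s)
    (hderiv : ∀ y ∈ interior (Set.Ici (0:ℝ)), HasDerivAt f (f' y) y)
    (hint : IntervalIntegrable f' MeasureTheory.volume u v)
    (hsconv : ∀ a ∈ Set.Icc u v, ∀ b ∈ Set.Icc u v, ∀ t ∈ Set.Icc (0:ℝ) 1,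
      |f' (t * a + (1 - t) * b)| ^ q ≤ t ^ s * |f' a| ^ q + (1 - t) ^ s * |f' b| ^ q) :
    |(v * f v - u * f u) / (2 * (v - u)) + (1 / 2) * f ((u + v) / 2)
        - (1 / (v - u)) * ∫ μ in u..v, f μ|
      ≤ (((v ^ (p + 1) - u ^ (p + 1)) / ((p + 1) * (v - u))) ^ (1 / p) / 4) *
          (((|f' ((u + v) / 2)| ^ q + |f' v| ^ q) / (s + 1)) ^ (1 / q)
            + ((|f' ((u + v) / 2)| ^ q + |f' u| ^ q) / (s + 1)) ^ (1 / q))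
    ∧ (((v ^ (p + 1) - u ^ (p + 1)) / ((p + 1) * (v - u))) ^ (1 / p) / 4) *
          (((|f' ((u + v) / 2)| ^ q + |f' v| ^ q) / (s + 1)) ^ (1 / q)
            + ((|f' ((u + v) / 2)| ^ q + |f' u| ^ q) / (s + 1)) ^ (1 / q))
      ≤ (((v ^ (p + 1) - u ^ (p + 1)) / ((p + 1) * (v - u))) ^ (1 / p) / 4) *
          ((|f' ((u + v) / 2)| ^ q + |f' v| ^ q) ^ (1 / q)
            + (|f' ((u + v) / 2)| ^ q + |f' u| ^ q) ^ (1 / q)) := by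
  have hholder : p.HolderConjugate q := Real.holderConjugate_comm.mpr
    (Real.holderConjugate_iff.mpr ⟨hq, by simpa only [one_div, add_comm] using hpq⟩)
  rw [show ((v ^ (p + 1) - u ^ (p + 1)) / ((p + 1) * (v - u))) ^ (1 / p) = genLogMean p u v
    from rfl]
  set m := (u + v) / 2 with hm
  have hum : u < m := by linarith
  have hmv : m < v := by linarith
  have hL := genLogMean_nonneg (p := p) (by linarith [hholder.pos]) hu.le huv.le
  have hsub₁ : Icc u m ⊆ Icc u v := Icc_subset_Icc_right hmv.le
  have hsub₂ : Icc m v ⊆ Icc u v := Icc_subset_Icc_left hum.le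
  have hleft := abs_integral_linear_mul_le_genLogMean (c := u) (u := u) (v := v) hholder hs0.le
    hum hu.le (by ring) (by linarith)
    (hint.mono_set (by rwa [uIcc_of_le hum.le, uIcc_of_le huv.le])) (SConvexOn.subset hsconv hsub₁)
  have hright := abs_integral_linear_mul_le_genLogMean (c := v) (u := u) (v := v) hholder hs0.le
    hmv hu.le (by linarith) (by ring)
    (hint.mono_set (by rwa [uIcc_of_le hmv.le, uIcc_of_le huv.le])) (SConvexOn.subset hsconv hsub₂)
  rw [add_comm (|f' u| ^ q), show m - u = (v - u) / 2 by linarith] at hleft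
  rw [show v - m = (v - u) / 2 by linarith] at hright
  refine ⟨?_, by gcongr <;> exact div_le_self (by positivity) (by linarith)⟩
  rw [trapezoid_midpoint_sub_integral_eq huv
    (fun x hx => hderiv x (by rw [interior_Ici]; exact hu.trans_le hx.1)) hint,
    abs_div, abs_of_pos (by linarith : (0:ℝ) < 2 * (v - u))]
  calc _ ≤ (genLogMean p u v * ((v - u) / 2) * ((|f' m| ^ q + |f' u| ^ q) / (s + 1)) ^ (1 / q)
        + genLogMean p u v * ((v - u) / 2) * ((|f' m| ^ q + |f' v| ^ q) / (s + 1)) ^ (1 / q))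
          / (2 * (v - u)) := by gcongr; exact (abs_add_le _ _).trans (add_le_add hleft hright)
    _ = _ := by
      have : v - u ≠ 0 := by linarith
      field_simp
      ring

theorem stmt_9 (f f' : ℝ → ℝ) (u v p q s : ℝ) (hu : 0 < u) (huv : u < v)
    (hq : 1 < q) (hpq : 1 / p + 1 / q = 1) (hs0 : 0 < s) (hs1 : s ≤ 1)
    (hderiv : ∀ y ∈ interior (Set.Ici (0:ℝ)), HasDerivAt f (f' y) y)
    (hint : IntervalIntegrable f' MeasureTheory.volume u v)
    (hsconv : ∀ a ∈ Set.Icc u v, ∀ b ∈ Set.Icc u v, ∀ t ∈ Set.Icc (0:ℝ) 1,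
      |f' (t * a + (1 - t) * b)| ^ q ≤ t ^ s * |f' a| ^ q + (1 - t) ^ s * |f' b| ^ q) :
    |(v * f v - u * f u) / (2 * (v - u)) + (1 / 2) * f ((u + v) / 2)
        - (1 / (v - u)) * ∫ μ in u..v, f μ|
      ≤ (((v ^ (p + 1) - u ^ (p + 1)) / ((p + 1) * (v - u))) ^ (1 / p) / 4) *
          (((|f' ((u + v) / 2)| ^ q + |f' v| ^ q) / (s + 1)) ^ (1 / q)
            + ((|f' ((u + v) / 2)| ^ q + |f' u| ^ q) / (s + 1)) ^ (1 / q))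
    ∧ (((v ^ (p + 1) - u ^ (p + 1)) / ((p + 1) * (v - u))) ^ (1 / p) / 4) *
          (((|f' ((u + v) / 2)| ^ q + |f' v| ^ q) / (s + 1)) ^ (1 / q)
            + ((|f' ((u + v) / 2)| ^ q + |f' u| ^ q) / (s + 1)) ^ (1 / q))
      ≤ (((v ^ (p + 1) - u ^ (p + 1)) / ((p + 1) * (v - u))) ^ (1 / p) / 4) *
          ((|f' ((u + v) / 2)| ^ q + |f' v| ^ q) ^ (1 / q)
            + (|f' ((u + v) / 2)| ^ q + |f' u| ^ q) ^ (1 / q)) :=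
  stmt_9_general f f' u v p q s hu huv hq hpq hs0 hderiv hint hsconv
end

section
/- Let J = [0,∞) and let f : J → ℝ be differentiable on the interior of J with f' integrable on [u,v], where u, v ∈ J and 0 < u < v. Let q ≥ 1 and s ∈ (0,1]. If |f'|^q is s-convex in the second sense on [u,v], then for every x ∈ [u,v]: |((v-x)(v·f(v) - u·f(x)) + (x-u)(v·f(x) - u·f(u)))/(v-u)² - (1/(v-u))·∫_u^v f(μ) dμ| ≤ ((v-x)²/(v-u)²)·A(u,v)^{1-1/q}·(1/((s+1)(s+2)))^{1/q}·(((s+1)u+v)·|f'(x)|^q + ((s+1)v+u)·|f'(v)|^q)^{1/q} + ((x-u)²/(v-u)²)·A(u,v)^{1-1/q}·(1/((s+1)(s+2)))^{1/q}·(((s+1)v+u)·|f'(x)|^q + ((s+1)u+v)·|f'(u)|^q)^{1/q}. -/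
/-!
Integrating by parts against a piecewise affine kernel and substituting `y = t x + (1 - t) b`
on `[x, v]` and on `[u, x]` writes the left-hand side as
`((v - x)² I_v + (x - u)² I_u) / (v - u)²`, where `I_b = ∫₀¹ w(t) f'(t x + (1 - t) b) dt` for a
nonnegative affine weight `w`. The weighted power-mean inequality
`∫ w |g| ≤ (∫ w) ^ (1 - 1/q) * (∫ w |g| ^ q) ^ (1/q)` and the `s`-convexity of `|f'| ^ q` then
bound `|I_b|` by the explicit moments `∫₀¹ w t ^ s` and `∫₀¹ w (1 - t) ^ s`.
-/

open MeasureTheory Set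

theorem integral_interp (c d : ℝ) : ∫ t in (0:ℝ)..1, (t * c + (1 - t) * d) = (c + d) / 2 := by
  have : (fun t : ℝ ↦ t * c + (1 - t) * d) = fun t ↦ (c - d) * t + d := by ext; ring
  rw [this, intervalIntegral.integral_add (intervalIntegral.intervalIntegrable_id.const_mul _)
      intervalIntegrable_const,
    intervalIntegral.integral_const_mul, integral_id, intervalIntegral.integral_const]
  simp only [one_pow, zero_pow two_ne_zero, sub_zero, smul_eq_mul, one_mul]
  ring

theorem integral_interp_mul_rpow {s : ℝ} (hs : -1 < s) (c d : ℝ) :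
    ∫ t in (0:ℝ)..1, (t * c + (1 - t) * d) * t ^ s = ((s + 1) * c + d) / ((s + 1) * (s + 2)) := by
  have hsplit : ∀ t ∈ uIcc (0:ℝ) 1,
      (t * c + (1 - t) * d) * t ^ s = (c - d) * t ^ (s + 1) + d * t ^ s := by
    intro t ht
    rw [uIcc_of_le zero_le_one] at ht
    rw [Real.rpow_add_one' ht.1 (by linarith)]
    ring
  rw [intervalIntegral.integral_congr hsplit, intervalIntegral.integral_add
    ((intervalIntegral.intervalIntegrable_rpow' (by linarith)).const_mul _)
    ((intervalIntegral.intervalIntegrable_rpow' hs).const_mul _),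
    intervalIntegral.integral_const_mul, intervalIntegral.integral_const_mul,
    integral_rpow (by left; linarith), integral_rpow (by left; linarith)]
  have h1 : s + 1 ≠ 0 := by linarith
  have h2 : s + 1 + 1 ≠ 0 := by linarith
  have h2' : s + 2 ≠ 0 := by linarith
  simp only [Real.one_rpow, Real.zero_rpow h1, Real.zero_rpow h2, sub_zero, one_div]
  field_simp
  ring

theorem integral_interp_mul_one_sub_rpow {s : ℝ} (hs : -1 < s) (c d : ℝ) :
    ∫ t in (0:ℝ)..1, (t * c + (1 - t) * d) * (1 - t) ^ s
      = ((s + 1) * d + c) / ((s + 1) * (s + 2)) := by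
  have := intervalIntegral.integral_comp_sub_left
    (fun t ↦ (t * d + (1 - t) * c) * t ^ s) (a := 0) (b := 1) 1
  simp only [sub_zero, sub_self, sub_sub_cancel] at this
  rw [← integral_interp_mul_rpow hs d c, ← this]
  congr 1 with t
  ring

theorem integral_mul_le_weight_mul_Lp_of_nonneg {α : Type*} [MeasurableSpace α] {μ : Measure α}
    {q : ℝ} (hq : 1 ≤ q) {w g : α → ℝ} (hw : 0 ≤ᵐ[μ] w) (hg : 0 ≤ᵐ[μ] g)
    (hwi : Integrable w μ) (hgm : AEStronglyMeasurable g μ)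
    (hwgi : Integrable (fun a ↦ w a * g a ^ q) μ) :
    ∫ a, w a * g a ∂μ ≤ (∫ a, w a ∂μ) ^ (1 - 1 / q) * (∫ a, w a * g a ^ q ∂μ) ^ (1 / q) := by
  have hq0 : 0 < q := one_pos.trans_le hq
  have hp : 0 ≤ 1 - 1 / q := sub_nonneg.2 ((div_le_one hq0).2 hq)
  have hwg : ∀ᵐ a ∂μ, 0 ≤ w a * g a := by
    filter_upwards [hw, hg] with a ha hga using mul_nonneg ha hga
  have hwgq : ∀ᵐ a ∂μ, 0 ≤ w a * g a ^ q := by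
    filter_upwards [hw, hg] with a ha hga using mul_nonneg ha (Real.rpow_nonneg hga q)
  -- `w g = w ^ (1 - 1/q) * (w g ^ q) ^ (1/q)`: Hölder for the exponents `1 - 1/q` and `1/q`.
  have hsplit : ∀ᵐ a ∂μ, ENNReal.ofReal (w a * g a) =
      ENNReal.ofReal (w a) ^ (1 - 1 / q) * ENNReal.ofReal (w a * g a ^ q) ^ (1 / q) := by
    filter_upwards [hw, hg] with a ha hga
    rw [ENNReal.ofReal_rpow_of_nonneg ha hp, ENNReal.ofReal_rpow_of_nonneg
      (mul_nonneg ha (Real.rpow_nonneg hga q)) (by positivity), ← ENNReal.ofReal_mul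
      (Real.rpow_nonneg ha _), Real.mul_rpow ha (Real.rpow_nonneg hga q),
      ← Real.rpow_mul hga, mul_one_div_cancel hq0.ne', Real.rpow_one, ← mul_assoc,
      ← Real.rpow_add' ha (by simp), sub_add_cancel, Real.rpow_one]
  have hholder := ENNReal.lintegral_mul_norm_pow_le hwi.aemeasurable.ennreal_ofReal
    hwgi.aemeasurable.ennreal_ofReal hp (by positivity) (sub_add_cancel 1 (1 / q))
  rw [← lintegral_congr_ae hsplit] at hholder
  rw [integral_eq_lintegral_of_nonneg_ae (f := fun a ↦ w a * g a) hwg (hwi.1.mul hgm),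
    integral_eq_lintegral_of_nonneg_ae hw hwi.1, integral_eq_lintegral_of_nonneg_ae hwgq hwgi.1,
    ENNReal.toReal_rpow, ENNReal.toReal_rpow, ← ENNReal.toReal_mul]
  exact ENNReal.toReal_mono (ENNReal.mul_ne_top
    (ENNReal.rpow_ne_top_of_nonneg hp hwi.lintegral_lt_top.ne)
    (ENNReal.rpow_ne_top_of_nonneg (by positivity) hwgi.lintegral_lt_top.ne)) hholder

theorem integral_interp_mul_sconvex_majorant {s : ℝ} (hs : 0 ≤ s) (c d A B : ℝ) :
    ∫ t in (0:ℝ)..1, (t * c + (1 - t) * d) * (t ^ s * A + (1 - t) ^ s * B)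
      = (((s + 1) * c + d) * A + ((s + 1) * d + c) * B) / ((s + 1) * (s + 2)) := by
  have hcont : Continuous fun t : ℝ ↦ t ^ s := Real.continuous_rpow_const hs
  simp_rw [mul_add, ← mul_assoc]
  rw [intervalIntegral.integral_add (by apply Continuous.intervalIntegrable; fun_prop)
      (by apply Continuous.intervalIntegrable; fun_prop),
    intervalIntegral.integral_mul_const, intervalIntegral.integral_mul_const,
    integral_interp_mul_rpow (by linarith), integral_interp_mul_one_sub_rpow (by linarith)]
  ring

theorem abs_integral_interp_mul_le {g : ℝ → ℝ} {c d q s A B : ℝ} (hc : 0 ≤ c) (hd : 0 ≤ d)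
    (hq : 1 ≤ q) (hs : 0 < s) (hgm : AEStronglyMeasurable g (volume.restrict (Ioc 0 1)))
    (hg : ∀ t ∈ Icc (0:ℝ) 1, |g t| ^ q ≤ t ^ s * A + (1 - t) ^ s * B) :
    |∫ t in (0:ℝ)..1, (t * c + (1 - t) * d) * g t|
      ≤ ((c + d) / 2) ^ (1 - 1 / q) * (1 / ((s + 1) * (s + 2))) ^ (1 / q)
        * (((s + 1) * c + d) * A + ((s + 1) * d + c) * B) ^ (1 / q) := by
  set w : ℝ → ℝ := fun t ↦ t * c + (1 - t) * d with hw
  set h : ℝ → ℝ := fun t ↦ t ^ s * A + (1 - t) ^ s * B with hh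
  have hA : 0 ≤ A := by
    simpa [Real.zero_rpow hs.ne'] using (Real.rpow_nonneg (abs_nonneg _) q).trans (hg 1 (by simp))
  have hB : 0 ≤ B := by
    simpa [Real.zero_rpow hs.ne'] using (Real.rpow_nonneg (abs_nonneg _) q).trans (hg 0 (by simp))
  have hw0 : ∀ t ∈ Icc (0:ℝ) 1, 0 ≤ w t := fun t ht ↦ by
    have := sub_nonneg.2 ht.2; have := ht.1; positivity
  have hwgq : ∀ t ∈ Icc (0:ℝ) 1, 0 ≤ w t * |g t| ^ q := fun t ht ↦
    mul_nonneg (hw0 t ht) (Real.rpow_nonneg (abs_nonneg _) q)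
  have hwg_le : ∀ t ∈ Icc (0:ℝ) 1, w t * |g t| ^ q ≤ w t * h t := fun t ht ↦
    mul_le_mul_of_nonneg_left (hg t ht) (hw0 t ht)
  have hwh : Continuous fun t ↦ w t * h t := by
    have := Real.continuous_rpow_const hs.le; simp only [hw, hh]; fun_prop
  have hae : ∀ P : ℝ → Prop, (∀ t ∈ Icc (0:ℝ) 1, P t) → ∀ᵐ t ∂volume.restrict (Ioc 0 1), P t :=
    fun P hP ↦ ae_restrict_of_forall_mem measurableSet_Ioc fun t ht ↦ hP t (Ioc_subset_Icc_self ht)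
  have hwi : IntervalIntegrable w volume 0 1 := by
    apply Continuous.intervalIntegrable; fun_prop
  have hwgqi : IntervalIntegrable (fun t ↦ w t * |g t| ^ q) volume 0 1 := by
    refine (intervalIntegrable_iff_integrableOn_Ioc_of_le zero_le_one).2
      (Integrable.mono' (hwh.integrableOn_Ioc) ?_ (hae _ fun t ht ↦ ?_))
    · exact (Continuous.aestronglyMeasurable (by fun_prop)).mul
        (hgm.norm.aemeasurable.pow_const q).aestronglyMeasurable
    · rw [Real.norm_of_nonneg (hwgq t ht)]; exact hwg_le t ht
  calc |∫ t in (0:ℝ)..1, w t * g t|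
      ≤ ∫ t in (0:ℝ)..1, w t * |g t| := by
        refine (intervalIntegral.abs_integral_le_integral_abs zero_le_one).trans_eq
          (intervalIntegral.integral_congr fun t ht ↦ ?_)
        rw [uIcc_of_le zero_le_one] at ht
        simp only [abs_mul, abs_of_nonneg (hw0 t ht)]
    _ ≤ (∫ t in (0:ℝ)..1, w t) ^ (1 - 1 / q) * (∫ t in (0:ℝ)..1, w t * |g t| ^ q) ^ (1 / q) := by
        simp only [intervalIntegral.integral_of_le zero_le_one]
        exact integral_mul_le_weight_mul_Lp_of_nonneg hq (hae _ hw0) (hae _ fun t _ ↦ abs_nonneg _)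
          hwi.1 hgm.norm hwgqi.1
    _ ≤ ((c + d) / 2) ^ (1 - 1 / q)
          * ((((s + 1) * c + d) * A + ((s + 1) * d + c) * B) / ((s + 1) * (s + 2))) ^ (1 / q) := by
        rw [integral_interp, ← integral_interp_mul_sconvex_majorant hs.le]
        gcongr
        · exact intervalIntegral.integral_nonneg zero_le_one hwgq
        · exact intervalIntegral.integral_mono_on zero_le_one hwgqi
            (hwh.intervalIntegrable 0 1) hwg_le
    _ = _ := by
        rw [div_eq_mul_one_div _ ((s + 1) * (s + 2)), mul_comm _ (1 / _),
          Real.mul_rpow (by positivity) (by positivity), mul_assoc]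

theorem integral_affine_mul_deriv {f f' : ℝ → ℝ} {a b : ℝ} (α β : ℝ)
    (hf : ∀ y ∈ uIcc a b, HasDerivAt f (f' y) y) (hf' : IntervalIntegrable f' volume a b) :
    ∫ y in a..b, (α * y + β) * f' y
      = (α * b + β) * f b - (α * a + β) * f a - α * ∫ y in a..b, f y := by
  have hlin : ∀ y ∈ uIcc a b, HasDerivAt (fun y ↦ α * y + β) α y := fun y _ ↦ by
    simpa using ((hasDerivAt_id y).const_mul α).add_const β
  rw [intervalIntegral.integral_mul_deriv_eq_deriv_mul hlin hf intervalIntegrable_const hf',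
    intervalIntegral.integral_const_mul]

theorem integral_eq_sub_mul_integral_zero_one (F : ℝ → ℝ) (a b : ℝ) :
    ∫ y in a..b, F y = (b - a) * ∫ t in (0:ℝ)..1, F (t * a + (1 - t) * b) := by
  have := intervalIntegral.smul_integral_comp_mul_add (a := 0) (b := 1) F (a - b) b
  simp only [mul_zero, zero_add, mul_one, sub_add_cancel, smul_eq_mul] at this
  rw [intervalIntegral.integral_symm, ← this, ← neg_mul, neg_sub]
  congr 2 with t
  ring_nf

theorem trapezoid_sub_average_eq {f f' : ℝ → ℝ} {u v x : ℝ} (huv : u < v) (hx : x ∈ Icc u v)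
    (hf : ∀ y ∈ Icc u v, HasDerivAt f (f' y) y) (hf' : IntervalIntegrable f' volume u v) :
    ((v - x) * (v * f v - u * f x) + (x - u) * (v * f x - u * f u)) / (v - u) ^ 2
        - (1 / (v - u)) * ∫ y in u..v, f y
      = ((v - x) ^ 2 * (∫ t in (0:ℝ)..1, (t * u + (1 - t) * v) * f' (t * x + (1 - t) * v))
          + (x - u) ^ 2 * ∫ t in (0:ℝ)..1, (t * v + (1 - t) * u) * f' (t * x + (1 - t) * u))
        / (v - u) ^ 2 := by
  have hux : uIcc u x ⊆ Icc u v := by rw [uIcc_of_le hx.1]; exact Icc_subset_Icc_right hx.2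
  have hxv : uIcc x v ⊆ Icc u v := by rw [uIcc_of_le hx.2]; exact Icc_subset_Icc_left hx.1
  have hf_int : ∀ {a b}, uIcc a b ⊆ Icc u v → IntervalIntegrable f volume a b := fun h ↦
    ContinuousOn.intervalIntegrable fun y hy ↦ (hf y (h hy)).continuousAt.continuousWithinAt
  have hf'_int : ∀ {a b}, uIcc a b ⊆ Icc u v → IntervalIntegrable f' volume a b := fun h ↦
    hf'.mono_set (by rwa [uIcc_of_le huv.le])
  have hright : (v - x) ^ 2 * (∫ t in (0:ℝ)..1, (t * u + (1 - t) * v) * f' (t * x + (1 - t) * v))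
      = ∫ y in x..v, ((v - u) * y + v * (u - x)) * f' y := by
    rw [integral_eq_sub_mul_integral_zero_one _ x v, sq, mul_assoc,
      ← intervalIntegral.integral_const_mul]
    congr 2 with t
    ring
  have hleft : (x - u) ^ 2 * (∫ t in (0:ℝ)..1, (t * v + (1 - t) * u) * f' (t * x + (1 - t) * u))
      = ∫ y in u..x, ((v - u) * y + u * (x - v)) * f' y := by
    rw [intervalIntegral.integral_symm x u, integral_eq_sub_mul_integral_zero_one _ x u, sq,
      ← neg_mul, neg_sub, mul_assoc, ← intervalIntegral.integral_const_mul]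
    congr 2 with t
    ring
  rw [hright, hleft, integral_affine_mul_deriv _ _ (fun y hy ↦ hf y (hxv hy)) (hf'_int hxv),
    integral_affine_mul_deriv _ _ (fun y hy ↦ hf y (hux hy)) (hf'_int hux),
    ← intervalIntegral.integral_add_adjacent_intervals (hf_int hux) (hf_int hxv)]
  field_simp [(sub_pos.2 huv).ne']
  ring

theorem aestronglyMeasurable_comp_of_hasDerivAt {α : Type*} [MeasurableSpace α] {μ : Measure α}
    {f f' : ℝ → ℝ} {s : Set ℝ} {γ : α → ℝ} (hf : ∀ y ∈ s, HasDerivAt f (f' y) y)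
    (hγ : Measurable γ) (hγs : ∀ᵐ a ∂μ, γ a ∈ s) : AEStronglyMeasurable (fun a ↦ f' (γ a)) μ :=
  ((measurable_deriv f).comp hγ).aestronglyMeasurable.congr
    (hγs.mono fun _ ha ↦ (hf _ ha).deriv)

theorem stmt_11_general (f f' : ℝ → ℝ) (u v q s : ℝ) (hu : 0 < u) (huv : u < v)
    (hq : 1 ≤ q) (hs0 : 0 < s)
    (hderiv : ∀ y ∈ interior (Set.Ici (0:ℝ)), HasDerivAt f (f' y) y)
    (hint : IntervalIntegrable f' MeasureTheory.volume u v)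
    (hsconv : ∀ a ∈ Set.Icc u v, ∀ b ∈ Set.Icc u v, ∀ t ∈ Set.Icc (0:ℝ) 1,
      |f' (t * a + (1 - t) * b)| ^ q ≤ t ^ s * |f' a| ^ q + (1 - t) ^ s * |f' b| ^ q)
    (x : ℝ) (hx : x ∈ Set.Icc u v) :
    |((v - x) * (v * f v - u * f x) + (x - u) * (v * f x - u * f u)) / (v - u) ^ 2
        - (1 / (v - u)) * ∫ μ in u..v, f μ|
      ≤ ((v - x) ^ 2 / (v - u) ^ 2) * ((u + v) / 2) ^ (1 - 1 / q) *
          (1 / ((s + 1) * (s + 2))) ^ (1 / q) *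
          (((s + 1) * u + v) * |f' x| ^ q + ((s + 1) * v + u) * |f' v| ^ q) ^ (1 / q)
        + ((x - u) ^ 2 / (v - u) ^ 2) * ((u + v) / 2) ^ (1 - 1 / q) *
          (1 / ((s + 1) * (s + 2))) ^ (1 / q) *
          (((s + 1) * v + u) * |f' x| ^ q + ((s + 1) * u + v) * |f' u| ^ q) ^ (1 / q) := by
  have hf : ∀ y ∈ Icc u v, HasDerivAt f (f' y) y := fun y hy ↦
    hderiv y (by rw [interior_Ici]; exact hu.trans_le hy.1)
  have hbound : ∀ b ∈ Icc u v, ∀ c d : ℝ, 0 ≤ c → 0 ≤ d →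
      |∫ t in (0:ℝ)..1, (t * c + (1 - t) * d) * f' (t * x + (1 - t) * b)|
        ≤ ((c + d) / 2) ^ (1 - 1 / q) * (1 / ((s + 1) * (s + 2))) ^ (1 / q)
          * (((s + 1) * c + d) * |f' x| ^ q + ((s + 1) * d + c) * |f' b| ^ q) ^ (1 / q) :=
    fun b hb c d hc hd ↦ abs_integral_interp_mul_le hc hd hq hs0
      (aestronglyMeasurable_comp_of_hasDerivAt hf (by fun_prop)
        (ae_restrict_of_forall_mem measurableSet_Ioc fun t ht ↦ by
          simpa using convex_Icc u v hx hb ht.1.le (sub_nonneg.2 ht.2) (add_sub_cancel _ _)))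
      (hsconv x hx b hb)
  have hright := hbound v ⟨huv.le, le_rfl⟩ u v hu.le (hu.trans huv).le
  have hleft := hbound u ⟨le_rfl, huv.le⟩ v u (hu.trans huv).le hu.le
  rw [add_comm v u] at hleft
  rw [trapezoid_sub_average_eq huv hx hf hint, abs_div,
    abs_of_pos (a := (v - u) ^ 2) (by nlinarith)]
  calc _ ≤ ((v - x) ^ 2 * |∫ t in (0:ℝ)..1, (t * u + (1 - t) * v) * f' (t * x + (1 - t) * v)|
          + (x - u) ^ 2 * |∫ t in (0:ℝ)..1, (t * v + (1 - t) * u) * f' (t * x + (1 - t) * u)|)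
          / (v - u) ^ 2 := by
        gcongr
        exact (abs_add_le _ _).trans_eq (by rw [abs_mul, abs_mul, abs_sq, abs_sq])
    _ ≤ _ := by
        grw [hright, hleft]
        exact le_of_eq (by ring)

theorem stmt_11 (f f' : ℝ → ℝ) (u v q s : ℝ) (hu : 0 < u) (huv : u < v)
    (hq : 1 ≤ q) (hs0 : 0 < s) (hs1 : s ≤ 1)
    (hderiv : ∀ y ∈ interior (Set.Ici (0:ℝ)), HasDerivAt f (f' y) y)
    (hint : IntervalIntegrable f' MeasureTheory.volume u v)
    (hsconv : ∀ a ∈ Set.Icc u v, ∀ b ∈ Set.Icc u v, ∀ t ∈ Set.Icc (0:ℝ) 1,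
      |f' (t * a + (1 - t) * b)| ^ q ≤ t ^ s * |f' a| ^ q + (1 - t) ^ s * |f' b| ^ q)
    (x : ℝ) (hx : x ∈ Set.Icc u v) :
    |((v - x) * (v * f v - u * f x) + (x - u) * (v * f x - u * f u)) / (v - u) ^ 2
        - (1 / (v - u)) * ∫ μ in u..v, f μ|
      ≤ ((v - x) ^ 2 / (v - u) ^ 2) * ((u + v) / 2) ^ (1 - 1 / q) *
          (1 / ((s + 1) * (s + 2))) ^ (1 / q) *
          (((s + 1) * u + v) * |f' x| ^ q + ((s + 1) * v + u) * |f' v| ^ q) ^ (1 / q)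
        + ((x - u) ^ 2 / (v - u) ^ 2) * ((u + v) / 2) ^ (1 - 1 / q) *
          (1 / ((s + 1) * (s + 2))) ^ (1 / q) *
          (((s + 1) * v + u) * |f' x| ^ q + ((s + 1) * u + v) * |f' u| ^ q) ^ (1 / q) :=
  stmt_11_general f f' u v q s hu huv hq hs0 hderiv hint hsconv x hx
end
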